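/- arXiv:2602.12446 — 5 statements merged into one kernel-verified Lean document; each statement's English description precedes it below -/
import Mathlib

section
/- If 𝒢 = (V, E₀, …, E_{τ−1}) is a temporal graph such that every snapshot has at most k edges (|E_t| ≤ k for all t), then the expanded twin-width of 𝒢 satisfies tww_→(𝒢) ≤ k + 3. -/
open SimpleGraph

/-- A temporal graph: a sequence of snapshot graphs over a common vertex set. -/
structure TemporalGraph (V : Type) (τ : ℕ) where
  snapshot : Fin τ → SimpleGraph V

namespace TemporalGraph

variable {V : Type} {τ : ℕ}

/-- The static expansion graph `𝒢_→` on `V × Fin τ`. -/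
def expansion (𝒢 : TemporalGraph V τ) : SimpleGraph (V × Fin τ) :=
  SimpleGraph.fromRel (fun a b =>
    (a.2 = b.2 ∧ (𝒢.snapshot a.2).Adj a.1 b.1) ∨
    (a.1 = b.1 ∧ (a.2 : ℕ) + 1 = (b.2 : ℕ)))

/-- The union graph `𝒢_↓`. -/
def unionGraph (𝒢 : TemporalGraph V τ) : SimpleGraph V := ⨆ t, 𝒢.snapshot t

end TemporalGraph

/-- A tree decomposition of a graph. -/
structure TreeDecomp {V : Type} (G : SimpleGraph V) where
  ι : Type
  tree : SimpleGraph ι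
  isTree : tree.IsTree
  bag : ι → Finset V
  cover : ∀ v : V, ∃ i, v ∈ bag i
  edgeCover : ∀ ⦃u v : V⦄, G.Adj u v → ∃ i, u ∈ bag i ∧ v ∈ bag i
  coherent : ∀ v : V, (tree.induce {i | v ∈ bag i}).Connected

/-- `G` has a tree decomposition of width at most `w`. -/
def TreewidthLE {V : Type} (G : SimpleGraph V) (w : ℕ) : Prop :=
  ∃ d : TreeDecomp G, ∀ i, (d.bag i).card ≤ w + 1

/-- The tree-width of `G`, as an extended natural number. -/
noncomputable def treewidth {V : Type} (G : SimpleGraph V) : ℕ∞ :=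
  sInf {w : ℕ∞ | ∃ n : ℕ, TreewidthLE G n ∧ w = n}

/-- Homogeneity of a pair of sets in a graph: complete or anticomplete. -/
def homog {α : Type} (G : SimpleGraph α) (X Y : Set α) : Prop :=
  (∀ x ∈ X, ∀ y ∈ Y, G.Adj x y) ∨ (∀ x ∈ X, ∀ y ∈ Y, ¬ G.Adj x y)

/-- A contraction sequence: a sequence of partitions from singletons to the
trivial partition, each step merging exactly two parts. -/
structure ContractionSeq (α : Type) where
  n : ℕ
  P : Fin (n + 1) → Set (Set α)
  isPartition : ∀ i, Setoid.IsPartition (P i)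
  first : P 0 = {S | ∃ v : α, S = {v}}
  last : P (Fin.last n) = {Set.univ}
  step : ∀ i : Fin n, ∃ X Y, X ∈ P i.castSucc ∧ Y ∈ P i.castSucc ∧ X ≠ Y ∧
    P i.succ = insert (X ∪ Y) (P i.castSucc \ {X, Y})

/-- Every part has at most `d` red (non-homogeneous) neighbours throughout. -/
def ContractionSeq.RedDegLE {α : Type} (c : ContractionSeq α)
    (hom : Set α → Set α → Prop) (d : ℕ) : Prop :=
  ∀ i, ∀ X ∈ c.P i, {Y | Y ∈ c.P i ∧ Y ≠ X ∧ ¬ hom X Y}.ncard ≤ d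

/-- `G` admits a `d`-contraction sequence. -/
def TwinwidthLE {α : Type} (G : SimpleGraph α) (d : ℕ) : Prop :=
  ∃ c : ContractionSeq α, c.RedDegLE (homog G) d

/-- The twin-width of `G`, as an extended natural number. -/
noncomputable def twinwidth {α : Type} (G : SimpleGraph α) : ℕ∞ :=
  sInf {w : ℕ∞ | ∃ d : ℕ, TwinwidthLE G d ∧ w = d}

/-!
Enumerate `V` as `v₀, …, v_{N-1}`. In a first phase, visit the rows `t = 0, …, τ-1` of the
expansion round-robin, and at the `q`-th visit of row `t` merge the copy of `v_{q+1}` into the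
part `{v₀, …, v_q} × {t}`. Row `t+1` is never ahead of row `t` and at most one merge behind it,
so vertically a part of row `t` sees one part of row `t-1` and at most two parts of row `t+1`;
horizontally each red neighbour is reached by its own edge of `E_t`, giving at most `k`. In a
second phase the rows are merged bottom-up, with red degree at most two.

Every partition is the fibre partition of a key map into `ℕ × ℕ`, and a contraction step
relabels one key value as another.
-/

section KeyedPartitions

variable {α : Type} {β : Type*}

theorem Setoid.classes_ker_of_injective {f : α → β} (hf : Function.Injective f) :
    (Setoid.ker f).classes = {S | ∃ v, S = {v}} := by
  ext S
  simp only [Setoid.classes, Setoid.ker_def, hf.eq_iff, Set.ofPred_eq_eq_singleton]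

theorem Setoid.classes_ker_of_forall_eq [Nonempty α] {f : α → β} (hf : ∀ x y, f x = f y) :
    (Setoid.ker f).classes = {Set.univ} := by
  have hfib (y : α) : {x | f x = f y} = Set.univ := Set.eq_univ_of_forall (hf · y)
  ext S
  simp [Setoid.classes, Setoid.ker_def, hfib]

theorem Setoid.classes_ker_relabel [DecidableEq β] {f : α → β} {a b : α} (hab : f a ≠ f b) :
    (Setoid.ker fun x => if f x = f a then f b else f x).classes =
      insert ({x | f x = f a} ∪ {x | f x = f b})
        ((Setoid.ker f).classes \ {{x | f x = f a}, {x | f x = f b}}) := by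
  set g : α → β := fun x => if f x = f a then f b else f x
  have hg_merged {y : α} (hy : f y = f a ∨ f y = f b) :
      {x | g x = g y} = {x | f x = f a} ∪ {x | f x = f b} := by
    ext x
    simp only [g, Set.mem_ofPred_eq, Set.mem_union]
    rcases hy with hy | hy <;> split_ifs <;> simp_all [eq_comm]
  have hg_other {y : α} (hya : f y ≠ f a) (hyb : f y ≠ f b) :
      {x | g x = g y} = {x | f x = f y} := by
    ext x
    simp only [g, Set.mem_ofPred_eq, if_neg hya]
    split_ifs with hx
    · exact ⟨fun h => absurd h.symm hyb, fun h => absurd (h.symm.trans hx) hya⟩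
    · rfl
  ext S
  simp only [Setoid.classes, Setoid.ker_def, Set.mem_ofPred_eq, Set.mem_insert_iff,
    Set.mem_sdiff, Set.mem_singleton_iff]
  constructor
  · rintro ⟨y, rfl⟩
    by_cases hy : f y = f a ∨ f y = f b
    · exact Or.inl (hg_merged hy)
    · push Not at hy
      rw [hg_other hy.1 hy.2]
      refine Or.inr ⟨⟨y, rfl⟩, ?_⟩
      rintro (h | h)
      · exact hy.1 (h.subset (Set.mem_ofPred_eq ▸ rfl))
      · exact hy.2 (h.subset (Set.mem_ofPred_eq ▸ rfl))
  · rintro (rfl | ⟨⟨y, rfl⟩, hS⟩)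
    · exact ⟨a, (hg_merged (Or.inl rfl)).symm⟩
    · push Not at hS
      have hya : f y ≠ f a := fun h => hS.1 (by simp only [h])
      have hyb : f y ≠ f b := fun h => hS.2 (by simp only [h])
      exact ⟨y, (hg_other hya hyb).symm⟩

-- Identifying each part with its key, these are the red neighbours of the part `f ⁻¹' {κ}`.
def redValues (G : SimpleGraph α) (f : α → β) (κ : β) : Set β :=
  {ρ | ρ ≠ κ ∧ ∃ x y, f x = κ ∧ f y = ρ ∧ G.Adj x y}

theorem redValues_finite [Finite α] (G : SimpleGraph α) (f : α → β) (κ : β) :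
    (redValues G f κ).Finite :=
  (Set.finite_range f).subset fun _ ⟨_, _, y, _, hy, _⟩ => ⟨y, hy⟩

theorem ncard_redValues_le_ncard_edgeSet [Finite α] (G : SimpleGraph α) (f : α → β) (κ : β) :
    (redValues G f κ).ncard ≤ G.edgeSet.ncard := by
  set W := {w | f w ≠ κ ∧ ∃ v, f v = κ ∧ G.Adj v w}
  have himage : redValues G f κ = f '' W := by
    ext ρ
    constructor
    · rintro ⟨hρ, v, w, hv, rfl, hvw⟩
      exact ⟨w, ⟨hρ, v, hv, hvw⟩, rfl⟩
    · rintro ⟨w, ⟨hw, v, hv, hvw⟩, rfl⟩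
      exact ⟨hw, v, w, hv, rfl, hvw⟩
  choose! src hsrc hadj using fun w (hw : w ∈ W) => hw.2
  -- an edge leaving the fibre determines its endpoint outside the fibre
  have hinj : Set.InjOn (fun w => s(src w, w)) W := by
    intro w₁ hw₁ w₂ hw₂ h
    rcases Sym2.eq_iff.mp h with ⟨-, h⟩ | ⟨h, -⟩
    · exact h
    · exact absurd (h ▸ hsrc w₁ hw₁) hw₂.1
  calc (redValues G f κ).ncard = (f '' W).ncard := by rw [himage]
    _ ≤ W.ncard := Set.ncard_image_le (Set.toFinite W)
    _ ≤ G.edgeSet.ncard :=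
      Set.ncard_le_ncard_of_injOn _ (fun w hw => hadj w hw) hinj (Set.toFinite _)

theorem ncard_red_le_ncard_redValues [Finite α] (G : SimpleGraph α) (f : α → β) (c : α) :
    {Y | Y ∈ (Setoid.ker f).classes ∧ Y ≠ {x | f x = f c} ∧ ¬ homog G {x | f x = f c} Y}.ncard ≤
      (redValues G f (f c)).ncard := by
  set fibre : β → Set α := fun κ => {x | f x = κ}
  refine (Set.ncard_le_ncard ?_ ((redValues_finite G f (f c)).image fibre)).trans
    (Set.ncard_image_le (redValues_finite G f (f c)))
  rintro Y ⟨⟨y, rfl⟩, hne, hred⟩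
  simp only [homog, not_or, not_forall, not_not] at hred
  obtain ⟨-, x, hx, z, hz, hxz⟩ := hred
  simp only [Setoid.ker_def, Set.mem_ofPred_eq] at hx hz hne
  refine ⟨f z, ⟨fun h => hne ?_, x, z, hx, rfl, hxz⟩, ?_⟩
  · simp only [← h, hz]
  · simp only [fibre, Setoid.ker_def, hz]

def IsMergeStep [DecidableEq β] (f g : α → β) : Prop :=
  ∃ a b, f a ≠ f b ∧ g = fun x => if f x = f a then f b else f x

theorem twinwidthLE_of_keys [Finite α] [Nonempty α] [DecidableEq β] {G : SimpleGraph α}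
    {d : ℕ} (n : ℕ) (f : ℕ → α → β) (h_first : Function.Injective (f 0))
    (h_last : ∀ x y, f n x = f n y)
    (h_step : ∀ i < n, IsMergeStep (f i) (f (i + 1)))
    (h_red : ∀ i c, (redValues G (f i) (f i c)).ncard ≤ d) :
    TwinwidthLE G d := by
  refine ⟨⟨n, fun j => (Setoid.ker (f j)).classes, fun j => Setoid.isPartition_classes _,
    Setoid.classes_ker_of_injective h_first, Setoid.classes_ker_of_forall_eq h_last,
    fun j => ?_⟩, ?_⟩
  · obtain ⟨a, b, hab, hstep⟩ := h_step j j.isLt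
    refine ⟨_, _, ⟨a, rfl⟩, ⟨b, rfl⟩, fun h => hab ?_, ?_⟩
    · exact (h.symm.subset (Set.mem_ofPred_eq ▸ (Setoid.ker_def.mpr rfl))).symm
    · simp only [Fin.val_castSucc, Fin.val_succ, hstep, Setoid.classes_ker_relabel hab]
      rfl
  · rintro j X ⟨c, rfl⟩
    exact ncard_red_le_ncard_redValues G (f j) c |>.trans (h_red j c)

end KeyedPartitions

namespace TemporalGraph

theorem expansion_adj_cases {V : Type} {τ : ℕ} {𝒢 : TemporalGraph V τ} {a b : V × Fin τ}
    (h : 𝒢.expansion.Adj a b) :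
    (a.2 = b.2 ∧ (𝒢.snapshot a.2).Adj a.1 b.1) ∨
      (a.1 = b.1 ∧ ((a.2 : ℕ) + 1 = b.2 ∨ (b.2 : ℕ) + 1 = a.2)) := by
  obtain ⟨-, h | h⟩ := (fromRel_adj _ _ _).mp h
  · tauto
  · rcases h with ⟨hrow, hadj⟩ | h
    · exact Or.inl ⟨hrow.symm, hrow ▸ hadj.symm⟩
    · exact Or.inr ⟨h.1.symm, Or.inr h.2⟩

end TemporalGraph

-- The number of `j < i` with `j % τ = t`: merges done in row `t` when the steps visit the rows
-- round-robin.
def roundRobinLevel (τ i t : ℕ) : ℕ := (i + (τ - 1 - t)) / τ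

theorem roundRobinLevel_eq {τ q s t : ℕ} (hs : s ≤ τ) (ht : t < τ) :
    roundRobinLevel τ (τ * q + s) t = q + if t < s then 1 else 0 := by
  rw [roundRobinLevel, show τ * q + s + (τ - 1 - t) = s + (τ - 1 - t) + τ * q by ring,
    Nat.add_mul_div_left _ _ (by omega), add_comm]
  congr 1
  split_ifs
  · exact Nat.div_eq_of_lt_le (by omega) (by omega)
  · exact Nat.div_eq_of_lt (by omega)

theorem roundRobinLevel_succ_le_and_le_succ_add_one {τ : ℕ} (i : ℕ) {t : ℕ} (ht : t + 1 < τ) :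
    roundRobinLevel τ i (t + 1) ≤ roundRobinLevel τ i t ∧
      roundRobinLevel τ i t ≤ roundRobinLevel τ i (t + 1) + 1 := by
  have hτ : 0 < τ := by omega
  rw [← Nat.div_add_mod i τ, roundRobinLevel_eq (Nat.mod_lt i hτ).le ht,
    roundRobinLevel_eq (Nat.mod_lt i hτ).le (by omega)]
  split_ifs <;> omega

section ExpansionKeys

variable {V : Type} {N τ : ℕ}

-- In row `t`, the vertices `w` with `e w ≤ roundRobinLevel τ i t` form one part and the other
-- vertices are singletons.
def vertexMergeKey (e : V ≃ Fin N) (i : ℕ) (p : V × Fin τ) : ℕ × ℕ :=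
  (p.2, max (e p.1) (roundRobinLevel τ i p.2))

-- Rows `0, …, r` form one part; the constant `N - 1` makes `rowMergeKey N 0` agree with
-- `vertexMergeKey` at the end of the first phase.
def rowMergeKey (N r : ℕ) (p : V × Fin τ) : ℕ × ℕ :=
  (max p.2 r, N - 1)

theorem vertexMergeKey_zero_injective (e : V ≃ Fin N) :
    Function.Injective (vertexMergeKey (τ := τ) e 0) := by
  rintro ⟨v, t⟩ ⟨w, u⟩ h
  have hlev (t : Fin τ) : roundRobinLevel τ 0 t = 0 := by
    simpa using roundRobinLevel_eq (q := 0) (Nat.zero_le τ) t.isLt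
  simp only [vertexMergeKey, hlev, Prod.mk.injEq, Nat.max_zero, Fin.val_inj] at h
  rw [e.injective h.2, h.1]

theorem vertexMergeKey_eq_rowMergeKey_zero (e : V ≃ Fin N) :
    vertexMergeKey (τ := τ) e ((N - 1) * τ) = rowMergeKey N 0 := by
  funext ⟨v, t⟩
  have hlev : roundRobinLevel τ ((N - 1) * τ) t = N - 1 := by
    simpa [mul_comm] using roundRobinLevel_eq (q := N - 1) (Nat.zero_le τ) t.isLt
  have := (e v).isLt
  simp only [vertexMergeKey, rowMergeKey, hlev, Nat.max_zero]
  congr 1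
  omega

theorem isMergeStep_vertexMergeKey (e : V ≃ Fin N) {q s : ℕ} (hs : s < τ) (hq : q + 1 < N) :
    IsMergeStep (vertexMergeKey (τ := τ) e (τ * q + s)) (vertexMergeKey e (τ * q + s + 1)) := by
  have hlev {t : ℕ} (ht : t < τ) :
      roundRobinLevel τ (τ * q + s) t = q + if t < s then 1 else 0 :=
    roundRobinLevel_eq hs.le ht
  have hlev' {t : ℕ} (ht : t < τ) :
      roundRobinLevel τ (τ * q + s + 1) t = q + if t < s + 1 then 1 else 0 :=
    roundRobinLevel_eq hs ht
  refine ⟨(e.symm ⟨0, by omega⟩, ⟨s, hs⟩), (e.symm ⟨q + 1, hq⟩, ⟨s, hs⟩), ?_, ?_⟩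
  · simp [vertexMergeKey, hlev hs]
  · funext ⟨v, t⟩
    simp only [vertexMergeKey, hlev hs, hlev t.isLt, hlev' t.isLt, Equiv.apply_symm_apply,
      Prod.mk.injEq]
    split_ifs <;> simp_all <;> omega

theorem isMergeStep_rowMergeKey (v : V) {r : ℕ} (hr : r + 1 < τ) :
    IsMergeStep (rowMergeKey (V := V) (τ := τ) N r) (rowMergeKey N (r + 1)) := by
  refine ⟨(v, ⟨r, by omega⟩), (v, ⟨r + 1, hr⟩), by simp [rowMergeKey], ?_⟩
  funext ⟨w, t⟩
  simp only [rowMergeKey, Prod.mk.injEq]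
  split_ifs <;> simp_all <;> omega

end ExpansionKeys

section RedDegree

variable {V : Type} {N τ : ℕ}

theorem ncard_redValues_vertexMergeKey_le {𝒢 : TemporalGraph V τ} {k : ℕ}
    (hE : ∀ t, (𝒢.snapshot t).edgeSet.ncard ≤ k) (e : V ≃ Fin N) (i : ℕ) (c : V × Fin τ) :
    (redValues 𝒢.expansion (vertexMergeKey e i) (vertexMergeKey e i c)).ncard ≤ k + 3 := by
  have : Finite V := Finite.of_equiv _ e.symm
  obtain ⟨cv, t⟩ := c
  set m := max (e cv : ℕ) (roundRobinLevel τ i t)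
  set H :=
    redValues (𝒢.snapshot t) (fun w => vertexMergeKey e i (w, t)) (vertexMergeKey e i (cv, t))
  have hsub : redValues 𝒢.expansion (vertexMergeKey e i) (vertexMergeKey e i (cv, t)) ⊆
      insert ((t : ℕ) + 1, m) (insert ((t : ℕ) + 1, m - 1)
        (insert ((t : ℕ) - 1, max m (roundRobinLevel τ i (t - 1))) H)) := by
    rintro ρ ⟨hne, ⟨v, t'⟩, ⟨w, u⟩, hx, rfl, hadj⟩
    obtain ⟨rfl, hm⟩ : t' = t ∧ max (e v : ℕ) (roundRobinLevel τ i t') = m := by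
      simp only [vertexMergeKey, Prod.mk.injEq, Fin.val_inj] at hx
      exact ⟨hx.1, hx.1 ▸ hx.2⟩
    simp only [Set.mem_insert_iff, vertexMergeKey, Prod.mk.injEq]
    rcases TemporalGraph.expansion_adj_cases hadj with ⟨rfl, hvw⟩ | ⟨rfl, hup | hdown⟩
    · exact Or.inr (Or.inr (Or.inr ⟨hne, v, w, hx, rfl, hvw⟩))
    · dsimp only at hup hm ⊢
      have := roundRobinLevel_succ_le_and_le_succ_add_one i (hup ▸ u.isLt)
      rw [← hup]
      omega
    · dsimp only at hdown hm ⊢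
      have := roundRobinLevel_succ_le_and_le_succ_add_one i (hdown ▸ t'.isLt)
      have hlev : roundRobinLevel τ i (u + 1) = roundRobinLevel τ i t' := by rw [hdown]
      rw [← hdown, Nat.add_sub_cancel]
      omega
  have hH : H.ncard ≤ k := (ncard_redValues_le_ncard_edgeSet _ _ _).trans (hE t)
  have : Finite H := (redValues_finite _ _ _).to_subtype
  calc _ ≤ _ := Set.ncard_le_ncard hsub (Set.toFinite _)
    _ ≤ H.ncard + 1 + 1 + 1 := by
      grw [Set.ncard_insert_le, Set.ncard_insert_le, Set.ncard_insert_le]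
    _ ≤ k + 3 := by omega

theorem ncard_redValues_rowMergeKey_le (𝒢 : TemporalGraph V τ) (r : ℕ) (κ : ℕ × ℕ) :
    (redValues 𝒢.expansion (rowMergeKey N r) κ).ncard ≤ 2 := by
  have hsub :
      redValues 𝒢.expansion (rowMergeKey N r) κ ⊆ {(κ.1 + 1, N - 1), (κ.1 - 1, N - 1)} := by
    rintro ρ ⟨hne, ⟨v, t⟩, ⟨w, u⟩, rfl, rfl, hadj⟩
    simp only [rowMergeKey, Set.mem_insert_iff, Set.mem_singleton_iff, Prod.mk.injEq, ne_eq,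
      and_true] at hne ⊢
    rcases TemporalGraph.expansion_adj_cases hadj with ⟨rfl, -⟩ | ⟨-, hud⟩
    · exact absurd rfl hne
    · dsimp only at hud
      omega
  calc _ ≤ _ := Set.ncard_le_ncard hsub (Set.toFinite _)
    _ ≤ 2 := (Set.ncard_insert_le _ _).trans (by rw [Set.ncard_singleton])

end RedDegree

section ExpansionContraction

variable {V : Type} {N τ : ℕ}

def expansionKey (e : V ≃ Fin N) (τ i : ℕ) : V × Fin τ → ℕ × ℕ :=
  if i ≤ (N - 1) * τ then vertexMergeKey e i else rowMergeKey N (i - (N - 1) * τ)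

theorem expansionKey_of_le (e : V ≃ Fin N) {i : ℕ} (h : i ≤ (N - 1) * τ) :
    expansionKey e τ i = vertexMergeKey e i :=
  if_pos h

theorem expansionKey_of_ge (e : V ≃ Fin N) {i : ℕ} (h : (N - 1) * τ ≤ i) :
    expansionKey e τ i = rowMergeKey N (i - (N - 1) * τ) := by
  rcases h.eq_or_lt with rfl | h
  · rw [expansionKey_of_le e le_rfl, Nat.sub_self, vertexMergeKey_eq_rowMergeKey_zero]
  · exact if_neg h.not_ge

theorem expansionKey_zero_injective (e : V ≃ Fin N) :
    Function.Injective (expansionKey e τ 0) :=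
  expansionKey_of_le e (Nat.zero_le _) ▸ vertexMergeKey_zero_injective e

theorem expansionKey_last_eq (e : V ≃ Fin N) (hN : 0 < N) (x y : V × Fin τ) :
    expansionKey e τ (N * τ - 1) x = expansionKey e τ (N * τ - 1) y := by
  have hx := x.2.isLt
  have hy := y.2.isLt
  have hNτ := Nat.le_mul_of_pos_left τ hN
  rw [expansionKey_of_ge e (by rw [Nat.sub_one_mul]; omega), Nat.sub_one_mul]
  simp only [rowMergeKey, Prod.mk.injEq, and_true]
  omega

theorem isMergeStep_expansionKey (e : V ≃ Fin N) (hN : 0 < N) {i : ℕ} (hi : i + 1 < N * τ) :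
    IsMergeStep (expansionKey e τ i) (expansionKey e τ (i + 1)) := by
  have hτ : 0 < τ := Nat.pos_of_mul_pos_left (by omega : 0 < N * τ)
  have hNτ : (N - 1) * τ + τ = N * τ := by
    rw [Nat.sub_one_mul, Nat.sub_add_cancel (Nat.le_mul_of_pos_left τ hN)]
  by_cases h : i < (N - 1) * τ
  · rw [expansionKey_of_le e h.le, expansionKey_of_le e h]
    have hq : i / τ + 1 < N := by
      have := (Nat.div_lt_iff_lt_mul hτ).mpr h
      omega
    simpa only [Nat.div_add_mod] using isMergeStep_vertexMergeKey e (Nat.mod_lt i hτ) hq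
  · rw [expansionKey_of_ge e (by omega), expansionKey_of_ge e (by omega),
      Nat.sub_add_comm (by omega)]
    exact isMergeStep_rowMergeKey (e.symm ⟨0, hN⟩) (by omega)

theorem ncard_redValues_expansionKey_le {𝒢 : TemporalGraph V τ} {k : ℕ}
    (hE : ∀ t, (𝒢.snapshot t).edgeSet.ncard ≤ k) (e : V ≃ Fin N) (i : ℕ) (c : V × Fin τ) :
    (redValues 𝒢.expansion (expansionKey e τ i) (expansionKey e τ i c)).ncard ≤ k + 3 := by
  by_cases h : i ≤ (N - 1) * τ
  · rw [expansionKey_of_le e h]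
    exact ncard_redValues_vertexMergeKey_le hE e i c
  · rw [expansionKey_of_ge e (by omega)]
    exact (ncard_redValues_rowMergeKey_le 𝒢 _ _).trans (by omega)

end ExpansionContraction

/-- if every snapshot has at most k edges, then the expanded
twin-width satisfies tww_→(𝒢) ≤ k + 3. -/
theorem twinwidth_expansion_le_of_few_edges {V : Type} [Fintype V] [Nonempty V]
    {τ : ℕ} (hτ : 0 < τ) (𝒢 : TemporalGraph V τ) (k : ℕ)
    (hE : ∀ t : Fin τ, ((𝒢.snapshot t).edgeSet.ncard ≤ k)) :
    twinwidth 𝒢.expansion ≤ ((k + 3 : ℕ) : ℕ∞) := by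
  have hN : 0 < Fintype.card V := Fintype.card_pos
  have : Nonempty (V × Fin τ) := ⟨(Classical.arbitrary V, ⟨0, hτ⟩)⟩
  set e := Fintype.equivFin V
  refine sInf_le ⟨k + 3, twinwidthLE_of_keys (Fintype.card V * τ - 1) (expansionKey e τ)
    (expansionKey_zero_injective e) (expansionKey_last_eq e hN)
    (fun i hi => isMergeStep_expansionKey e hN (by omega))
    (ncard_redValues_expansionKey_le hE e), rfl⟩
end

section
/- Let 𝒢 be a temporal graph and let 𝔗 be a tree decomposition of its static expansion graph 𝒢_→ of width w. Then the tree decomposition obtained by adding to every bag all untime vertices u ∈ V such that (u,t) is in that bag for some t, is a tree decomposition of the σ₁-structure S₁(𝒢) (i.e., of its Gaifman graph), of width at most 2w + 1. In particular tw(S₁(𝒢)) ≤ 2·tw(𝒢_→) + 1. -/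
open SimpleGraph

/-- The Gaifman graph of the σ₁-structure of a temporal graph: domain
V ⊕ (V × Fin τ), with relations adj, succ, app. -/
def gaifmanSigma1 {V : Type} {τ : ℕ} (𝒢 : TemporalGraph V τ) :
    SimpleGraph (V ⊕ V × Fin τ) :=
  SimpleGraph.fromRel (fun a b =>
    match a, b with
    | Sum.inr p, Sum.inr q =>
        (p.2 = q.2 ∧ (𝒢.snapshot p.2).Adj p.1 q.1) ∨
        (p.1 = q.1 ∧ (p.2 : ℕ) + 1 = (q.2 : ℕ))
    | Sum.inl v, Sum.inr p => v = p.1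
    | _, _ => False)

/-!
Each time vertex `(v, t)` is replaced in every bag by the pair `(v, t), v`. An edge of the
σ₁-structure is either an edge of `𝒢_→` or an `app`-pair `v, (v, t)`, which now shares every bag
of `(v, t)`. The bags containing an untime vertex `v` are those meeting the time copies of `v`;
these copies form a path in `𝒢_→`, and the bags meeting a connected vertex set always induce a
subtree. Bags at most double in size, so the width goes from `w` to `2w + 1`.
-/

section TreeDecomposition

variable {α β : Type} {G : SimpleGraph α}

namespace TreeDecomp

lemma reachable_of_mem_bag (d : TreeDecomp G) {S : Set d.ι} {a : α} (hS : {k | a ∈ d.bag k} ⊆ S)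
    {i j : d.ι} (hi : a ∈ d.bag i) (hj : a ∈ d.bag j) :
    (d.tree.induce S).Reachable ⟨i, hS hi⟩ ⟨j, hS hj⟩ :=
  ((d.coherent a).preconnected ⟨i, hi⟩ ⟨j, hj⟩).map (induceHomOfLE _ hS).toHom

lemma connected_induce_bagsMeeting (d : TreeDecomp G) {X : Set α} (hX : (G.induce X).Connected) :
    (d.tree.induce {i | ∃ a ∈ X, a ∈ d.bag i}).Connected := by
  set S := {i | ∃ a ∈ X, a ∈ d.bag i}
  have hsub : ∀ a ∈ X, {k | a ∈ d.bag k} ⊆ S := fun a ha k hk => ⟨a, ha, hk⟩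
  have walk_reach : ∀ (x y : X), (G.induce X).Walk x y → ∀ i j (hi : x.1 ∈ d.bag i)
      (hj : y.1 ∈ d.bag j), (d.tree.induce S).Reachable ⟨i, x.1, x.2, hi⟩ ⟨j, y.1, y.2, hj⟩ := by
    intro x y p
    induction p with
    | nil => exact fun i j hi hj => d.reachable_of_mem_bag (hsub _ (Subtype.prop _)) hi hj
    | @cons x z y hxz _ ih =>
      intro i j hi hj
      obtain ⟨k, hxk, hzk⟩ := d.edgeCover hxz
      exact (d.reachable_of_mem_bag (hsub _ x.2) hi hxk).trans (ih k j hzk hj)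
  obtain ⟨⟨a, ha⟩⟩ := hX.nonempty
  obtain ⟨i, hi⟩ := d.cover a
  refine (connected_iff _).2 ⟨?_, ⟨⟨i, a, ha, hi⟩⟩⟩
  rintro ⟨i, x, hx, hi⟩ ⟨j, y, hy, hj⟩
  exact walk_reach ⟨x, hx⟩ ⟨y, hy⟩ (hX.preconnected _ _).some i j hi hj

def blowUp (d : TreeDecomp G) [DecidableEq β] (H : SimpleGraph β) (φ : α → Finset β)
    (hadj : ∀ ⦃x y⦄, H.Adj x y → ∃ a a', (a = a' ∨ G.Adj a a') ∧ x ∈ φ a ∧ y ∈ φ a')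
    (hconn : ∀ x, (G.induce {a | x ∈ φ a}).Connected) : TreeDecomp H where
  ι := d.ι
  tree := d.tree
  isTree := d.isTree
  bag i := (d.bag i).biUnion φ
  cover x := by
    obtain ⟨⟨a, ha⟩⟩ := (hconn x).nonempty
    obtain ⟨i, hi⟩ := d.cover a
    exact ⟨i, Finset.mem_biUnion.2 ⟨a, hi, ha⟩⟩
  edgeCover x y hxy := by
    obtain ⟨a, a', haa', hx, hy⟩ := hadj hxy
    obtain ⟨i, hi, hi'⟩ : ∃ i, a ∈ d.bag i ∧ a' ∈ d.bag i := by
      rcases haa' with rfl | haa'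
      · exact (d.cover a).imp fun _ h => ⟨h, h⟩
      · exact d.edgeCover haa'
    exact ⟨i, Finset.mem_biUnion.2 ⟨a, hi, hx⟩, Finset.mem_biUnion.2 ⟨a', hi', hy⟩⟩
  coherent x := by
    have hbags : {i | x ∈ (d.bag i).biUnion φ} = {i | ∃ a ∈ {a | x ∈ φ a}, a ∈ d.bag i} := by
      ext i
      simp [and_comm]
    rw [hbags]
    exact d.connected_induce_bagsMeeting (hconn x)

end TreeDecomp

lemma connected_induce_singleton (G : SimpleGraph α) (a : α) : (G.induce {a}).Connected :=
  Subgraph.singletonSubgraph_connected.induce_verts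

lemma treewidthLE_bot (α : Type) (w : ℕ) : TreewidthLE (⊥ : SimpleGraph α) w := by
  refine ⟨⟨Option α, starGraph none, isTree_starGraph none, Option.toFinset,
    fun a => ⟨some a, by simp⟩, fun _ _ h => h.elim, fun a => ?_⟩, fun i => ?_⟩
  · have : {i : Option α | a ∈ i.toFinset} = {some a} := by ext i; cases i <;> simp [eq_comm]
    rw [this]
    exact connected_induce_singleton _ (some a)
  · cases i <;> simp

lemma TreewidthLE.treewidth_le {w : ℕ} (h : TreewidthLE G w) : treewidth G ≤ w :=
  sInf_le ⟨w, h, rfl⟩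

lemma exists_treewidthLE_treewidth_eq (h : treewidth G ≠ ⊤) :
    ∃ n : ℕ, TreewidthLE G n ∧ treewidth G = n := by
  have hne : {w : ℕ∞ | ∃ n : ℕ, TreewidthLE G n ∧ w = n}.Nonempty :=
    Set.nonempty_iff_ne_empty.2 fun he => h (by rw [treewidth, he, sInf_empty])
  exact csInf_mem hne

lemma treewidth_le_two_mul_add_one {H : SimpleGraph β}
    (h : ∀ w, TreewidthLE G w → TreewidthLE H (2 * w + 1)) :
    treewidth H ≤ 2 * treewidth G + 1 := by
  by_cases hG : treewidth G = ⊤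
  · simp [hG, ENat.mul_top]
  obtain ⟨n, hn, hGn⟩ := exists_treewidthLE_treewidth_eq hG
  rw [hGn]
  exact_mod_cast (h n hn).treewidth_le

end TreeDecomposition

section Sigma1

variable {V : Type} {τ : ℕ}

@[simp]
lemma gaifmanSigma1_adj_inl_inl (𝒢 : TemporalGraph V τ) (u v : V) :
    ¬ (gaifmanSigma1 𝒢).Adj (Sum.inl u) (Sum.inl v) := by
  simp [gaifmanSigma1]

@[simp]
lemma gaifmanSigma1_adj_inl_inr (𝒢 : TemporalGraph V τ) (v : V) (p : V × Fin τ) :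
    (gaifmanSigma1 𝒢).Adj (Sum.inl v) (Sum.inr p) ↔ v = p.1 := by
  simp [gaifmanSigma1]

@[simp]
lemma gaifmanSigma1_adj_inr_inr (𝒢 : TemporalGraph V τ) (p q : V × Fin τ) :
    (gaifmanSigma1 𝒢).Adj (Sum.inr p) (Sum.inr q) ↔ 𝒢.expansion.Adj p q := by
  simp [gaifmanSigma1, TemporalGraph.expansion]

lemma gaifmanSigma1_eq_bot (𝒢 : TemporalGraph V 0) : gaifmanSigma1 𝒢 = ⊥ := by
  ext (u | ⟨_, ⟨_, ⟨⟩⟩⟩) (v | ⟨_, ⟨_, ⟨⟩⟩⟩)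
  simp

namespace TemporalGraph

lemma expansion_adj_succ (𝒢 : TemporalGraph V τ) {v : V} {s t : Fin τ}
    (h : (s : ℕ) + 1 = t) : 𝒢.expansion.Adj (v, s) (v, t) := by
  simp [expansion, Fin.ext_iff]
  omega

lemma connected_induce_timeCopies (𝒢 : TemporalGraph V τ) (hτ : 0 < τ) (v : V) :
    (𝒢.expansion.induce {p | p.1 = v}).Connected := by
  let f : pathGraph τ →g 𝒢.expansion.induce {p | p.1 = v} :=
    { toFun := fun t => ⟨(v, t), rfl⟩
      map_rel' := fun {s t} hst => by
        rcases pathGraph_adj.1 hst with h | h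
        · exact 𝒢.expansion_adj_succ h
        · exact (𝒢.expansion_adj_succ h).symm }
  have hf : Function.Surjective f := by
    rintro ⟨⟨u, t⟩, rfl⟩
    exact ⟨t, rfl⟩
  exact (connected_iff _).2 ⟨(pathGraph_preconnected τ).map f hf, ⟨f ⟨0, hτ⟩⟩⟩

def withUntime [DecidableEq V] (p : V × Fin τ) : Finset (V ⊕ V × Fin τ) :=
  {Sum.inr p, Sum.inl p.1}

section WithUntime

variable [DecidableEq V]

@[simp]
lemma inl_mem_withUntime {v : V} {p : V × Fin τ} : Sum.inl v ∈ withUntime p ↔ p.1 = v := by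
  simp [withUntime, eq_comm]

@[simp]
lemma inr_mem_withUntime {p q : V × Fin τ} : Sum.inr q ∈ withUntime p ↔ p = q := by
  simp [withUntime, eq_comm]

lemma card_withUntime_le (p : V × Fin τ) : (withUntime p).card ≤ 2 :=
  Finset.card_le_two

lemma exists_withUntime_of_gaifmanSigma1_adj (𝒢 : TemporalGraph V τ)
    ⦃x y : V ⊕ V × Fin τ⦄ (hxy : (gaifmanSigma1 𝒢).Adj x y) :
    ∃ p q, (p = q ∨ 𝒢.expansion.Adj p q) ∧ x ∈ withUntime p ∧ y ∈ withUntime q := by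
  rcases x with u | p <;> rcases y with v | q
  · simp at hxy
  · exact ⟨q, q, .inl rfl, by simp [(gaifmanSigma1_adj_inl_inr 𝒢 u q).1 hxy], by simp⟩
  · exact ⟨p, p, .inl rfl, by simp, by simp [(gaifmanSigma1_adj_inl_inr 𝒢 v p).1 hxy.symm]⟩
  · exact ⟨p, q, .inr ((gaifmanSigma1_adj_inr_inr 𝒢 p q).1 hxy), by simp, by simp⟩

lemma connected_induce_withUntime (𝒢 : TemporalGraph V τ) (hτ : 0 < τ)
    (x : V ⊕ V × Fin τ) : (𝒢.expansion.induce {p | x ∈ withUntime p}).Connected := by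
  rcases x with v | q
  · have hv : {p : V × Fin τ | Sum.inl v ∈ withUntime p} = {p | p.1 = v} := by
      ext
      simp
    rw [hv]
    exact 𝒢.connected_induce_timeCopies hτ v
  · have hq : {p : V × Fin τ | Sum.inr q ∈ withUntime p} = {q} := by
      ext
      simp
    rw [hq]
    exact connected_induce_singleton _ q

end WithUntime

lemma treewidthLE_gaifmanSigma1 (𝒢 : TemporalGraph V τ) {w : ℕ}
    (h : TreewidthLE 𝒢.expansion w) : TreewidthLE (gaifmanSigma1 𝒢) (2 * w + 1) := by
  classical
  rcases Nat.eq_zero_or_pos τ with rfl | hτ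
  · rw [gaifmanSigma1_eq_bot]
    exact treewidthLE_bot _ _
  obtain ⟨d, hd⟩ := h
  refine ⟨d.blowUp (gaifmanSigma1 𝒢) withUntime
    𝒢.exists_withUntime_of_gaifmanSigma1_adj (𝒢.connected_induce_withUntime hτ), fun i => ?_⟩
  calc ((d.bag i).biUnion withUntime).card
      ≤ (d.bag i).card * 2 :=
        Finset.card_biUnion_le_card_mul _ _ _ fun p _ => card_withUntime_le p
    _ ≤ (w + 1) * 2 := Nat.mul_le_mul_right 2 (hd i)
    _ = 2 * w + 1 + 1 := by ring

end TemporalGraph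

end Sigma1

/-- from a tree decomposition of 𝒢_→ of width w one obtains a
tree decomposition of the σ₁-structure of width at most 2w+1; in particular
tw(S₁(𝒢)) ≤ 2·tw(𝒢_→) + 1. -/
theorem treewidth_gaifmanSigma1_le {V : Type} {τ : ℕ} (𝒢 : TemporalGraph V τ) :
    (∀ w : ℕ, TreewidthLE 𝒢.expansion w → TreewidthLE (gaifmanSigma1 𝒢) (2 * w + 1)) ∧
    treewidth (gaifmanSigma1 𝒢) ≤ 2 * treewidth 𝒢.expansion + 1 :=
  ⟨fun _ => 𝒢.treewidthLE_gaifmanSigma1,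
    treewidth_le_two_mul_add_one fun _ => 𝒢.treewidthLE_gaifmanSigma1⟩
end

section
/- Every graph of maximum degree Δ admits a proper edge coloring with Δ + 1 colors (Vizing's theorem); in particular, every graph of maximum degree at most 4 admits a proper edge coloring with 5 colors. -/
open SimpleGraph

/-!
Colour the edges one at a time with `Δ + 1` colours, so that every vertex misses some colour.
To colour a new edge `xy`, take a maximal fan `y = F 0, F 1, …, F k` of neighbours of `x` in which
the colour of the spoke `x F (i + 1)` is missing at `F i`, a colour `a` missing at `x` and a colour
`d` missing at `F k`. If `d` is also missing at `x`, rotate the fan: every spoke takes the colour of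
the next one and the last spoke gets `d`. Otherwise `d` sits on a spoke `x F j`, and swapping `a`
and `d` along the Kempe chain through `x` frees `d` at `x`. That chain is a path starting at `x`, so
it cannot reach both `F (j - 1)` and `F k`, which both miss `d`; in either case rotating the fan up
to `F (j - 1)` or up to `F k` colours `xy`.
-/

namespace SimpleGraph

variable {V : Type*} {G : SimpleGraph V}

theorem Connected.ncard_le_two_of_degree_le [Finite V] (hG : G.Connected)
    (hdeg : ∀ v, (G.neighborSet v).ncard ≤ 2) {s : Set V}
    (hs : ∀ v ∈ s, (G.neighborSet v).ncard ≤ 1) : s.ncard ≤ 2 := by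
  classical
  have := Fintype.ofFinite V
  have hdeg' : ∀ v, G.degree v + (if v ∈ s then 1 else 0) ≤ 2 := by
    intro v
    have hncard : (G.neighborSet v).ncard = G.degree v := by
      rw [Set.ncard_eq_toFinset_card', Set.toFinset_card, card_neighborSet_eq_degree]
    split_ifs with hv
    · have := hs v hv; omega
    · have := hdeg v; omega
  have hsum : ∑ v, G.degree v + s.ncard ≤ 2 * Fintype.card V := by
    have hind : ∑ v, (if v ∈ s then 1 else 0) = s.ncard := by
      simp [Finset.sum_boole, Set.ncard_eq_toFinset_card']
    calc ∑ v, G.degree v + s.ncard = ∑ v, (G.degree v + if v ∈ s then 1 else 0) := by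
          rw [Finset.sum_add_distrib, hind]
      _ ≤ ∑ _v : V, 2 := Finset.sum_le_sum fun v _ => hdeg' v
      _ = 2 * Fintype.card V := by simp [mul_comm]
  have hedges := hG.card_vert_le_card_edgeSet_add_one
  rw [Nat.card_eq_fintype_card, Nat.card_eq_fintype_card, ← edgeFinset_card] at hedges
  rw [sum_degrees_eq_twice_card_edges] at hsum
  omega

theorem ncard_le_two_of_reachable [Finite V] (hdeg : ∀ v, (G.neighborSet v).ncard ≤ 2)
    {x : V} {s : Set V} (hreach : ∀ v ∈ s, G.Reachable x v)
    (hs : ∀ v ∈ s, (G.neighborSet v).ncard ≤ 1) : s.ncard ≤ 2 := by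
  set C := G.connectedComponentMk x
  have hsC : s ⊆ Set.range ((↑) : C.supp → V) := by
    intro v hv
    exact ⟨⟨v, (C.mem_supp_iff v).mpr (ConnectedComponent.sound (hreach v hv).symm)⟩, rfl⟩
  have hdegC : ∀ w : C.supp, (C.toSimpleGraph.neighborSet w).ncard ≤ (G.neighborSet w).ncard :=
    fun w => Set.ncard_le_ncard_of_injOn (↑) (fun u hu => hu) Subtype.val_injective.injOn
  rw [← Set.ncard_preimage_of_injective_subset_range Subtype.val_injective hsC]
  exact C.connected_toSimpleGraph.ncard_le_two_of_degree_le
    (fun w => (hdegC w).trans (hdeg w)) (fun w hw => (hdegC w).trans (hs w hw))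

end SimpleGraph

namespace EdgeColoring

variable {V α : Type*} {E E' : Set (Sym2 V)} {c : Sym2 V → α} {a b γ δ : α} {v x : V}
  {F : ℕ → V} {k : ℕ}

def IsProperOn (E : Set (Sym2 V)) (c : Sym2 V → α) : Prop :=
  ∀ e₁ ∈ E, ∀ e₂ ∈ E, e₁ ≠ e₂ → (∃ v, v ∈ e₁ ∧ v ∈ e₂) → c e₁ ≠ c e₂

def IsMissing (E : Set (Sym2 V)) (c : Sym2 V → α) (v : V) (γ : α) : Prop :=
  ∀ e ∈ E, v ∈ e → c e ≠ γ

theorem IsProperOn.mono (hc : IsProperOn E c) (h : E' ⊆ E) : IsProperOn E' c :=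
  fun e₁ h₁ e₂ h₂ => hc e₁ (h h₁) e₂ (h h₂)

theorem IsMissing.mono (h : IsMissing E c v γ) (hE' : E' ⊆ E) : IsMissing E' c v γ :=
  fun e he => h e (hE' he)

theorem IsProperOn.isMissing_sdiff_singleton (hc : IsProperOn E c) {e : Sym2 V} (he : e ∈ E)
    (hv : v ∈ e) : IsMissing (E \ {e}) c v (c e) :=
  fun f hf hvf => hc f hf.1 e he hf.2 ⟨v, hvf, hv⟩

theorem IsMissing.update_insert [DecidableEq V] (h : IsMissing E c v γ) (e : Sym2 V)
    (hδ : δ ≠ γ) : IsMissing (insert e E) (Function.update c e δ) v γ := by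
  rintro f (rfl | hf) hvf
  · simpa using hδ
  · by_cases hfe : f = e
    · simpa [hfe] using hδ
    · simpa [hfe] using h f hf hvf

theorem IsProperOn.update_insert [DecidableEq V] (hc : IsProperOn E c) {e : Sym2 V}
    (he : ∀ v ∈ e, IsMissing E c v γ) : IsProperOn (insert e E) (Function.update c e γ) := by
  have key : ∀ f ∈ insert e E, f ≠ e → (∃ v, v ∈ e ∧ v ∈ f) → Function.update c e γ f ≠ γ := by
    rintro f hf hfe ⟨v, hve, hvf⟩
    simpa [hfe] using he v hve f (hf.resolve_left hfe) hvf
  intro e₁ h₁ e₂ h₂ hne hshare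
  by_cases h₁e : e₁ = e <;> by_cases h₂e : e₂ = e
  · exact absurd (h₁e.trans h₂e.symm) hne
  · subst h₁e
    simpa using (key e₂ h₂ h₂e hshare).symm
  · subst h₂e
    obtain ⟨v, hv₁, hv₂⟩ := hshare
    simpa using key e₁ h₁ h₁e ⟨v, hv₂, hv₁⟩
  · simpa [h₁e, h₂e] using hc e₁ (h₁.resolve_left h₁e) e₂ (h₂.resolve_left h₂e) hne hshare

theorem exists_isMissing [Finite V] {G : SimpleGraph V} {Δ : ℕ} (hE : E ⊆ G.edgeSet)
    (hdeg : (G.neighborSet v).ncard ≤ Δ) (c : Sym2 V → Fin (Δ + 1)) :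
    ∃ γ, IsMissing E c v γ := by
  classical
  by_contra! h
  have hused : Set.univ ⊆ c '' G.incidenceSet v := by
    intro γ _
    obtain ⟨e, he, hve, rfl⟩ : ∃ e ∈ E, v ∈ e ∧ c e = γ := by
      simpa [IsMissing] using h γ
    exact ⟨e, ⟨hE he, hve⟩, rfl⟩
  have hcard : (G.incidenceSet v).ncard = (G.neighborSet v).ncard :=
    Set.ncard_congr' (G.incidenceSetEquivNeighborSet v)
  have := (Set.ncard_le_ncard hused).trans (Set.ncard_image_le (Set.toFinite _))
  simp only [Set.ncard_univ, Nat.card_eq_fintype_card, Fintype.card_fin] at this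
  omega

/-- A Vizing fan at `x`; its first spoke `s(x, F 0)` is the edge still to be coloured. -/
structure IsFan (E : Set (Sym2 V)) (c : Sym2 V → α) (x : V) (F : ℕ → V) (k : ℕ) : Prop where
  injOn : Set.InjOn F (Set.Iic k)
  ne_center : ∀ i ≤ k, F i ≠ x
  mem : ∀ i, 0 < i → i ≤ k → s(x, F i) ∈ E
  isMissing : ∀ i < k, IsMissing E c (F i) (c s(x, F (i + 1)))

theorem IsFan.spoke_ne (hF : IsFan E c x F k) {i j : ℕ} (hi : i ≤ k) (hj : j ≤ k) (hij : i ≠ j) :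
    s(x, F i) ≠ s(x, F j) :=
  fun h => hij (hF.injOn hi hj (Sym2.congr_right.mp h))

theorem IsFan.color_ne (hc : IsProperOn E c) (hF : IsFan E c x F k) {i j : ℕ} (hi₀ : 0 < i)
    (hi : i ≤ k) (hj₀ : 0 < j) (hj : j ≤ k) (hij : i ≠ j) : c s(x, F i) ≠ c s(x, F j) :=
  hc _ (hF.mem i hi₀ hi) _ (hF.mem j hj₀ hj) (hF.spoke_ne hi hj hij)
    ⟨x, Sym2.mem_mk_left _ _, Sym2.mem_mk_left _ _⟩

theorem IsFan.recolor (hF : IsFan E c x F k) {c' : Sym2 V → α} {m : ℕ} (hm : m ≤ k)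
    (h : ∀ i < m, IsMissing E c' (F i) (c' s(x, F (i + 1)))) : IsFan E c' x F m where
  injOn := hF.injOn.mono (Set.Iic_subset_Iic.mpr hm)
  ne_center i hi := hF.ne_center i (hi.trans hm)
  mem i hi₀ hi := hF.mem i hi₀ (hi.trans hm)
  isMissing := h

theorem IsFan.shift [DecidableEq V] (hc : IsProperOn E c) (hF : IsFan E c x F (k + 1)) :
    IsFan (insert s(x, F 0) (E \ {s(x, F 1)})) (Function.update c s(x, F 0) (c s(x, F 1))) x
      (fun i => F (i + 1)) k where
  injOn i hi j hj h := by simpa using hF.injOn (by simpa using hi) (by simpa using hj) h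
  ne_center i hi := hF.ne_center (i + 1) (by omega)
  mem i hi₀ hi := Set.mem_insert_of_mem _
    ⟨hF.mem (i + 1) (by omega) (by omega), hF.spoke_ne (by omega) (by omega) (by omega)⟩
  isMissing i hi := by
    rw [Function.update_of_ne (hF.spoke_ne (by omega) (by omega) (by omega))]
    exact ((hF.isMissing (i + 1) (by omega)).mono Set.sdiff_subset).update_insert _
      (hF.color_ne hc (by omega) (by omega) (by omega) (by omega) (by omega))

theorem IsFan.exists_isProperOn_insert (hc : IsProperOn E c) (hF : IsFan E c x F k) {d : α}
    (hx : IsMissing E c x d) (hk : IsMissing E c (F k) d) :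
    ∃ c' : Sym2 V → α, IsProperOn (insert s(x, F 0) E) c' := by
  classical
  induction k generalizing E c F with
  | zero =>
    refine ⟨Function.update c s(x, F 0) d, hc.update_insert fun v hv => ?_⟩
    rcases Sym2.mem_iff.mp hv with rfl | rfl
    exacts [hx, hk]
  | succ k ih =>
    have h₁ : s(x, F 1) ∈ E := hF.mem 1 one_pos (by omega)
    have hd : c s(x, F 1) ≠ d := hx _ h₁ (Sym2.mem_mk_left _ _)
    have hc' : IsProperOn (insert s(x, F 0) (E \ {s(x, F 1)}))
        (Function.update c s(x, F 0) (c s(x, F 1))) :=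
      (hc.mono Set.sdiff_subset).update_insert fun v hv => by
        rcases Sym2.mem_iff.mp hv with rfl | rfl
        · exact hc.isMissing_sdiff_singleton h₁ (Sym2.mem_mk_left _ _)
        · exact (hF.isMissing 0 (by omega)).mono Set.sdiff_subset
    obtain ⟨c', hc''⟩ := ih hc' (hF.shift hc) ((hx.mono Set.sdiff_subset).update_insert _ hd)
      ((hk.mono Set.sdiff_subset).update_insert _ hd)
    refine ⟨c', ?_⟩
    rwa [Set.insert_comm, Set.insert_sdiff_singleton, Set.insert_eq_of_mem h₁] at hc''

theorem IsFan.snoc (hF : IsFan E c x F k) {z : V} (hzx : z ≠ x) (hzF : ∀ i ≤ k, F i ≠ z)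
    (hz : s(x, z) ∈ E) (hmiss : IsMissing E c (F k) (c s(x, z))) :
    IsFan E c x (Function.update F (k + 1) z) (k + 1) := by
  have hlt : ∀ i ≤ k, Function.update F (k + 1) z i = F i :=
    fun i hi => Function.update_of_ne (by omega) _ _
  refine ⟨fun i hi j hj h => ?_, fun i hi => ?_, fun i hi₀ hi => ?_, fun i hi => ?_⟩
  · simp only [Set.mem_Iic] at hi hj
    rcases hi.eq_or_lt with rfl | hi <;> rcases hj.eq_or_lt with rfl | hj
    · rfl
    · rw [Function.update_self, hlt j (by omega)] at h
      exact absurd h.symm (hzF j (by omega))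
    · rw [Function.update_self, hlt i (by omega)] at h
      exact absurd h (hzF i (by omega))
    · rw [hlt i (by omega), hlt j (by omega)] at h
      exact hF.injOn (Set.mem_Iic.mpr (by omega)) (Set.mem_Iic.mpr (by omega)) h
  · rcases hi.eq_or_lt with rfl | hi
    · simpa using hzx
    · rw [hlt i (by omega)]; exact hF.ne_center i (by omega)
  · rcases hi.eq_or_lt with rfl | hi
    · simpa using hz
    · rw [hlt i (by omega)]; exact hF.mem i hi₀ (by omega)
  · rw [hlt i (by omega)]
    rcases (Nat.lt_succ_iff.mp hi).eq_or_lt with rfl | hi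
    · simpa using hmiss
    · rw [hlt (i + 1) (by omega)]; exact hF.isMissing i hi

theorem exists_maximal_isFan [Finite V] {y : V} (hy : y ≠ x) :
    ∃ F k, IsFan E c x F k ∧ F 0 = y ∧ ∀ z ≠ x, s(x, z) ∈ E →
      IsMissing E c (F k) (c s(x, z)) → ∃ i ≤ k, F i = z := by
  classical
  let P : ℕ → Prop := fun k => ∃ F, IsFan E c x F k ∧ F 0 = y
  have hbound : ∀ k, P k → k < Nat.card V := by
    rintro k ⟨F, hF, -⟩
    have := Nat.card_le_card_of_injective (fun i : Fin (k + 1) => F i) fun i j h =>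
      Fin.ext (hF.injOn (Set.mem_Iic.mpr (by omega)) (Set.mem_Iic.mpr (by omega)) h)
    simpa using this
  have hP₀ : P 0 :=
    ⟨fun _ => y, ⟨fun _ _ _ _ _ => by simp_all, fun _ _ => hy, fun _ _ _ => by omega,
      fun _ _ => by omega⟩, rfl⟩
  obtain ⟨F, hF, hF₀⟩ : P (Nat.findGreatest P (Nat.card V)) :=
    Nat.findGreatest_spec (Nat.zero_le _) hP₀
  refine ⟨F, _, hF, hF₀, fun z hzx hz hmiss => ?_⟩
  by_contra! hzF
  have hnext : P (Nat.findGreatest P (Nat.card V) + 1) :=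
    ⟨_, hF.snoc hzx hzF hz hmiss, by simpa [Function.update_of_ne] using hF₀⟩
  have := Nat.le_findGreatest (hbound _ hnext).le hnext
  omega

section Kempe

open Classical

def kempeGraph (E : Set (Sym2 V)) (c : Sym2 V → α) (a b : α) : SimpleGraph V :=
  fromEdgeSet {e | e ∈ E ∧ (c e = a ∨ c e = b)}

noncomputable def kempeSwap [DecidableEq α] (E : Set (Sym2 V)) (c : Sym2 V → α) (a b : α) (x : V) :
    Sym2 V → α :=
  fun e => if ∃ y ∈ e, (kempeGraph E c a b).Reachable x y then Equiv.swap a b (c e) else c e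

theorem kempeGraph_adj {u w : V} : (kempeGraph E c a b).Adj u w ↔
    (s(u, w) ∈ E ∧ (c s(u, w) = a ∨ c s(u, w) = b)) ∧ u ≠ w :=
  fromEdgeSet_adj _

theorem kempeGraph_comm : kempeGraph E c a b = kempeGraph E c b a := by
  simp only [kempeGraph, or_comm]

theorem kempeGraph_reachable_of_mem {e : Sym2 V} (he : e ∈ E) (hab : c e = a ∨ c e = b)
    {y z : V} (hy : y ∈ e) (hz : z ∈ e) (hxy : (kempeGraph E c a b).Reachable x y) :
    (kempeGraph E c a b).Reachable x z := by
  induction e with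
  | _ u w =>
    by_cases huw : u = w
    · subst huw
      rw [Sym2.mem_iff, or_self] at hy hz
      rwa [hz, ← hy]
    · have hadj : (kempeGraph E c a b).Adj u w := kempeGraph_adj.mpr ⟨⟨he, hab⟩, huw⟩
      rcases Sym2.mem_iff.mp hy with rfl | rfl <;> rcases Sym2.mem_iff.mp hz with rfl | rfl
      exacts [hxy, hxy.trans hadj.reachable, hxy.trans hadj.symm.reachable, hxy]

theorem IsProperOn.ncard_neighborSet_kempeGraph_le (hc : IsProperOn E c) (t : Finset α)
    (ht : ∀ w, (kempeGraph E c a b).Adj v w → c s(v, w) ∈ t) :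
    ((kempeGraph E c a b).neighborSet v).ncard ≤ t.card := by
  have hE : ∀ w, (kempeGraph E c a b).Adj v w → s(v, w) ∈ E := fun w hw =>
    (kempeGraph_adj.mp hw).1.1
  rw [← Set.ncard_coe_finset]
  refine Set.ncard_le_ncard_of_injOn (fun w => c s(v, w)) (fun w hw => ht w hw) ?_
  intro w₁ h₁ w₂ h₂ hcol
  by_contra hne
  exact hc _ (hE w₁ h₁) _ (hE w₂ h₂) (fun h => hne (Sym2.congr_right.mp h))
    ⟨v, Sym2.mem_mk_left _ _, Sym2.mem_mk_left _ _⟩ hcol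

theorem IsProperOn.ncard_neighborSet_kempeGraph_le_one (hc : IsProperOn E c)
    (hv : IsMissing E c v a) : ((kempeGraph E c a b).neighborSet v).ncard ≤ 1 := by
  refine (hc.ncard_neighborSet_kempeGraph_le {b} fun w hw => ?_).trans_eq (Finset.card_singleton b)
  obtain ⟨⟨he, ha | hb⟩, -⟩ := kempeGraph_adj.mp hw
  · exact absurd ha (hv _ he (Sym2.mem_mk_left _ _))
  · exact Finset.mem_singleton.mpr hb

variable [DecidableEq α]

theorem kempeSwap_of_ne {e : Sym2 V} (ha : c e ≠ a) (hb : c e ≠ b) :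
    kempeSwap E c a b x e = c e := by
  unfold kempeSwap
  split_ifs <;> simp [Equiv.swap_apply_of_ne_of_ne ha hb]

/-- The chain is closed under the `a`/`b`-coloured edges of `E`, so any end of `e` tells whether
`e` is swapped. -/
theorem kempeSwap_of_mem {e : Sym2 V} (he : e ∈ E) (hv : v ∈ e) :
    kempeSwap E c a b x e =
      if (kempeGraph E c a b).Reachable x v then Equiv.swap a b (c e) else c e := by
  by_cases hab : c e = a ∨ c e = b
  · have hchain : (∃ y ∈ e, (kempeGraph E c a b).Reachable x y) ↔
        (kempeGraph E c a b).Reachable x v :=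
      ⟨fun ⟨y, hy, hxy⟩ => kempeGraph_reachable_of_mem he hab hy hv hxy, fun h => ⟨v, hv, h⟩⟩
    simp only [kempeSwap, hchain]
  · rw [not_or] at hab
    rw [kempeSwap_of_ne hab.1 hab.2]
    split_ifs <;> simp [Equiv.swap_apply_of_ne_of_ne hab.1 hab.2]

theorem IsProperOn.kempeSwap (hc : IsProperOn E c) : IsProperOn E (kempeSwap E c a b x) := by
  rintro e₁ h₁ e₂ h₂ hne ⟨v, hv₁, hv₂⟩
  rw [kempeSwap_of_mem h₁ hv₁, kempeSwap_of_mem h₂ hv₂]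
  have := hc e₁ h₁ e₂ h₂ hne ⟨v, hv₁, hv₂⟩
  split_ifs <;> simpa

theorem isMissing_kempeSwap_iff :
    IsMissing E (kempeSwap E c a b x) v γ ↔ IsMissing E c v
      (if (kempeGraph E c a b).Reachable x v then Equiv.swap a b γ else γ) := by
  have key : ∀ e ∈ E, v ∈ e → (kempeSwap E c a b x e = γ ↔
      c e = if (kempeGraph E c a b).Reachable x v then Equiv.swap a b γ else γ) := by
    intro e he hv
    rw [kempeSwap_of_mem he hv]
    split_ifs
    exacts [Equiv.swap_apply_eq_iff, Iff.rfl]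
  exact forall₂_congr fun e he => imp_congr_right fun hv => not_congr (key e he hv)

theorem isMissing_kempeSwap_iff_of_ne (ha : γ ≠ a) (hb : γ ≠ b) :
    IsMissing E (kempeSwap E c a b x) v γ ↔ IsMissing E c v γ := by
  rw [isMissing_kempeSwap_iff, Equiv.swap_apply_of_ne_of_ne ha hb, ite_self]

/-- The Kempe chain through a vertex `x` missing `a` is a path starting at `x`; only its other end
can miss `b`. -/
theorem not_reachable_of_isMissing [Finite V] (hc : IsProperOn E c) (hx : IsMissing E c x a)
    {u w : V} (hu : IsMissing E c u b) (hw : IsMissing E c w b) (hux : u ≠ x) (hwx : w ≠ x)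
    (huw : u ≠ w) (hxu : (kempeGraph E c a b).Reachable x u) :
    ¬ (kempeGraph E c a b).Reachable x w := by
  intro hxw
  have hdeg : ∀ y, ((kempeGraph E c a b).neighborSet y).ncard ≤ 2 := fun y =>
    (hc.ncard_neighborSet_kempeGraph_le {a, b} fun z hz => by
      simpa using (kempeGraph_adj.mp hz).1.2).trans Finset.card_le_two
  have hend : ∀ y, IsMissing E c y b → ((kempeGraph E c a b).neighborSet y).ncard ≤ 1 :=
    fun y hy => kempeGraph_comm (c := c) ▸ hc.ncard_neighborSet_kempeGraph_le_one hy
  have h := ncard_le_two_of_reachable hdeg (x := x) (s := {x, u, w})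
    (by rintro y (h | h | h) <;> rw [h]; exacts [hxu, hxw])
    (by rintro y (h | h | h) <;> rw [h]
        exacts [hc.ncard_neighborSet_kempeGraph_le_one hx, hend u hu, hend w hw])
  rw [Set.ncard_insert_of_notMem (by simp [hux.symm, hwx.symm]), Set.ncard_pair huw] at h
  omega

end Kempe

theorem IsFan.isMissing_kempeSwap [DecidableEq α] (hc : IsProperOn E c) (hF : IsFan E c x F k)
    {a d : α} (ha : IsMissing E c x a) {j : ℕ} (hj₀ : 0 < j) (hjk : j ≤ k)
    (hjd : c s(x, F j) = d) {i : ℕ} (hi : i < k) (hij : i + 1 ≠ j) :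
    IsMissing E (kempeSwap E c a d x) (F i) (kempeSwap E c a d x s(x, F (i + 1))) := by
  have hia : c s(x, F (i + 1)) ≠ a := ha _ (hF.mem (i + 1) (by omega) hi) (Sym2.mem_mk_left _ _)
  have hid : c s(x, F (i + 1)) ≠ d := hjd ▸ hF.color_ne hc (by omega) hi hj₀ hjk hij
  rw [kempeSwap_of_ne hia hid, isMissing_kempeSwap_iff_of_ne hia hid]
  exact hF.isMissing i hi

theorem IsFan.exists_isProperOn_insert_of_kempe [Finite V] [DecidableEq α] (hc : IsProperOn E c)
    (hF : IsFan E c x F k) {a d : α} (ha : IsMissing E c x a) (hd : IsMissing E c (F k) d)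
    {j : ℕ} (hj₀ : 0 < j) (hjk : j < k) (hjd : c s(x, F j) = d) :
    ∃ c' : Sym2 V → α, IsProperOn (insert s(x, F 0) E) c' := by
  set c₁ := kempeSwap E c a d x with hc₁_def
  have hc₁ : IsProperOn E c₁ := hc.kempeSwap
  have hx₁ : IsMissing E c₁ x d := by
    rw [isMissing_kempeSwap_iff, if_pos .rfl, Equiv.swap_apply_right]
    exact ha
  have hprev : IsMissing E c (F (j - 1)) d := by
    simpa [Nat.sub_add_cancel hj₀, hjd] using hF.isMissing (j - 1) (by omega)
  have hfan₁ : ∀ i < k, i + 1 ≠ j → IsMissing E c₁ (F i) (c₁ s(x, F (i + 1))) :=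
    fun i hi hij => hF.isMissing_kempeSwap hc ha hj₀ hjk.le hjd hi hij
  by_cases hA : IsMissing E c₁ (F (j - 1)) d
  · exact (hF.recolor (by omega) fun i hi => hfan₁ i (by omega) (by omega)).exists_isProperOn_insert
      hc₁ hx₁ hA
  have hreach : (kempeGraph E c a d).Reachable x (F (j - 1)) := by
    by_contra h
    rw [isMissing_kempeSwap_iff, if_neg h] at hA
    exact hA hprev
  have hk_reach : ¬ (kempeGraph E c a d).Reachable x (F k) :=
    not_reachable_of_isMissing hc ha hprev hd (hF.ne_center _ (by omega)) (hF.ne_center k le_rfl)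
      (fun h => by have := hF.injOn (Set.mem_Iic.mpr (by omega)) Set.self_mem_Iic h; omega)
      hreach
  have hk₁ : IsMissing E c₁ (F k) d := by
    rw [isMissing_kempeSwap_iff, if_neg hk_reach]
    exact hd
  have hj₁ : c₁ s(x, F j) = a := by
    rw [hc₁_def, kempeSwap_of_mem (hF.mem j hj₀ hjk.le) (Sym2.mem_mk_left _ _), if_pos .rfl, hjd,
      Equiv.swap_apply_right]
  have hprev₁ : IsMissing E c₁ (F (j - 1)) a := by
    rw [isMissing_kempeSwap_iff, if_pos hreach, Equiv.swap_apply_left]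
    exact hprev
  refine (hF.recolor le_rfl fun i hi => ?_).exists_isProperOn_insert hc₁ hx₁ hk₁
  by_cases hij : i + 1 = j
  · rw [hij, hj₁, show i = j - 1 by omega]
    exact hprev₁
  · exact hfan₁ i hi hij

theorem exists_isProperOn_insert [Finite V] {G : SimpleGraph V} {Δ : ℕ}
    (hdeg : ∀ v, (G.neighborSet v).ncard ≤ Δ) (hE : E ⊆ G.edgeSet) {c : Sym2 V → Fin (Δ + 1)}
    (hc : IsProperOn E c) {y : V} (hxy : G.Adj x y) (hnew : s(x, y) ∉ E) :
    ∃ c' : Sym2 V → Fin (Δ + 1), IsProperOn (insert s(x, y) E) c' := by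
  obtain ⟨F, k, hF, rfl, hmax⟩ := exists_maximal_isFan (E := E) (c := c) hxy.ne'
  obtain ⟨a, ha⟩ := exists_isMissing hE (hdeg x) c
  obtain ⟨d, hd⟩ := exists_isMissing hE (hdeg (F k)) c
  by_cases hdx : IsMissing E c x d
  · exact hF.exists_isProperOn_insert hc hdx hd
  obtain ⟨e, he, hxe, hed⟩ : ∃ e ∈ E, x ∈ e ∧ c e = d := by simpa [IsMissing] using hdx
  obtain ⟨z, rfl⟩ := Sym2.mem_iff_exists.mp hxe
  obtain ⟨j, hjk, rfl⟩ := hmax z (G.ne_of_adj (hE he)).symm he (hed ▸ hd)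
  have hj₀ : 0 < j := Nat.pos_of_ne_zero (by rintro rfl; exact hnew he)
  have hjk : j < k := hjk.lt_of_ne (by rintro rfl; exact hd _ he (Sym2.mem_mk_right _ _) hed)
  exact hF.exists_isProperOn_insert_of_kempe hc ha hd hj₀ hjk hed

end EdgeColoring

/-- Vizing's theorem: every graph of maximum degree at most Δ
admits a proper edge coloring with Δ + 1 colors; in particular every graph of
maximum degree at most 4 admits a proper edge coloring with 5 colors. -/
theorem vizing {V : Type} [Fintype V] (G : SimpleGraph V) (Δ : ℕ)
    (hdeg : ∀ v : V, (G.neighborSet v).ncard ≤ Δ) :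
    ∃ c : Sym2 V → Fin (Δ + 1),
      ∀ e₁ ∈ G.edgeSet, ∀ e₂ ∈ G.edgeSet, e₁ ≠ e₂ →
        (∃ v, v ∈ e₁ ∧ v ∈ e₂) → c e₁ ≠ c e₂ := by
  refine Set.Finite.induction_on_subset
    (motive := fun E _ => ∃ c : Sym2 V → Fin (Δ + 1), EdgeColoring.IsProperOn E c) G.edgeSet (Set.toFinite _)
    ⟨fun _ => 0, fun _ he => he.elim⟩ ?_
  rintro e E he hEG heE ⟨c, hc⟩
  induction e using Sym2.ind with
  | _ x y => exact EdgeColoring.exists_isProperOn_insert hdeg hEG hc he heE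
end

section
/- Let 𝒢 be a temporal graph, Δ ≥ 1, a = (v, t_a) a time vertex, and r ≥ 1. Then the Gaifman graph of the substructure of the σ-structure S(𝒢) (signature {adj, succ}) induced by the r-neighbourhood N_r(a) (computed in the σ_Δ Gaifman graph) is an induced subgraph of the differential 𝒢_→^{t_a − rΔ, 2rΔ+1}, and consequently its tree-width is at most the (2rΔ+1)-differential tree-width of 𝒢: tw(S(𝒢)[N_r(a)]) ≤ dtw_{2rΔ+1}(𝒢). -/
open SimpleGraph

/-- The Gaifman graph of the σ_Δ-structure of a temporal graph, on V × Fin τ. -/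
def gaifmanDelta {V : Type} {τ : ℕ} (𝒢 : TemporalGraph V τ) (Δ : ℕ) :
    SimpleGraph (V × Fin τ) :=
  SimpleGraph.fromRel (fun a b =>
    (a.2 = b.2 ∧ (𝒢.snapshot a.2).Adj a.1 b.1) ∨
    (a.1 = b.1 ∧ (a.2 : ℕ) < (b.2 : ℕ) ∧ (b.2 : ℕ) ≤ (a.2 : ℕ) + Δ))

/-- The r-neighbourhood of a in G: vertices reachable by a walk of length ≤ r. -/
def ball {α : Type} (G : SimpleGraph α) (a : α) (r : ℕ) : Set α :=
  {b | ∃ w : G.Walk a b, w.length ≤ r}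

/-- The differential of 𝒢 at t over a window of Δ snapshots: the static
expansion graph of the snapshots G_t, …, G_{t+Δ−1}. -/
def TemporalGraph.differential {V : Type} {τ : ℕ} (𝒢 : TemporalGraph V τ)
    (t Δ : ℕ) (h : t + Δ ≤ τ) : SimpleGraph (V × Fin Δ) :=
  TemporalGraph.expansion ⟨fun s => 𝒢.snapshot ⟨t + (s : ℕ), by omega⟩⟩

/-- dtw_Δ(𝒢) ≤ w : every differential over windows of size Δ has a tree
decomposition of width at most w. -/
def DtwLE {V : Type} {τ : ℕ} (𝒢 : TemporalGraph V τ) (Δ w : ℕ) : Prop :=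
  ∀ (t : ℕ) (h : t + Δ ≤ τ), TreewidthLE (𝒢.differential t Δ h) w

/-! Every vertex of the ball `N_r(a)` of the σ_Δ Gaifman graph lies within `rΔ` snapshots of
`a`, since each Gaifman edge moves at most `Δ` snapshots in time. Hence shifting time by
`t_a − rΔ` embeds the ball, with the edges of the static expansion, as an induced subgraph of the
differential over the window of `2rΔ + 1` snapshots; and tree decompositions pull back along
induced embeddings. -/

theorem TreewidthLE.of_embedding {α β : Type} {G : SimpleGraph α} {H : SimpleGraph β}
    (f : G ↪g H) {w : ℕ} (hH : TreewidthLE H w) : TreewidthLE G w := by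
  obtain ⟨d, hd⟩ := hH
  have mem_bag : ∀ i x, x ∈ (d.bag i).preimage f f.injective.injOn ↔ f x ∈ d.bag i :=
    fun _ _ => Finset.mem_preimage
  refine ⟨⟨d.ι, d.tree, d.isTree, fun i => (d.bag i).preimage f f.injective.injOn,
    fun u => ?_, fun u u' huu' => ?_, fun u => ?_⟩, fun i => ?_⟩
  · obtain ⟨i, hi⟩ := d.cover (f u)
    exact ⟨i, (mem_bag i u).2 hi⟩
  · obtain ⟨i, hi, hi'⟩ := d.edgeCover (f.map_rel_iff.2 huu')
    exact ⟨i, (mem_bag i u).2 hi, (mem_bag i u').2 hi'⟩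
  · have hset : {i | u ∈ (d.bag i).preimage f f.injective.injOn} = {i | f u ∈ d.bag i} :=
      Set.ext fun i => mem_bag i u
    exact hset ▸ d.coherent (f u)
  · exact (Finset.card_le_card_of_injOn f (fun x hx => (mem_bag i x).1 hx)
      f.injective.injOn).trans (hd i)

theorem SimpleGraph.Walk.le_add_length_mul {α : Type*} {G : SimpleGraph α} (f : α → ℕ) {Δ : ℕ}
    (hf : ∀ ⦃a b⦄, G.Adj a b → f b ≤ f a + Δ) {a b : α} (p : G.Walk a b) :
    f b ≤ f a + p.length * Δ := by
  induction p with
  | nil => simp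
  | cons hadj p ih =>
    rw [Walk.length_cons, Nat.add_one_mul]
    have := hf hadj
    omega

theorem le_add_mul_of_mem_ball {α : Type} {G : SimpleGraph α} (f : α → ℕ) {Δ : ℕ}
    (hf : ∀ ⦃a b⦄, G.Adj a b → f b ≤ f a + Δ) {a b : α} {r : ℕ} (hb : b ∈ _root_.ball G a r) :
    f b ≤ f a + r * Δ ∧ f a ≤ f b + r * Δ := by
  obtain ⟨p, hp⟩ := hb
  have hmul : p.length * Δ ≤ r * Δ := Nat.mul_le_mul_right Δ hp
  have h₁ := p.le_add_length_mul f hf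
  have h₂ := p.reverse.le_add_length_mul f hf
  rw [Walk.length_reverse] at h₂
  omega

theorem gaifmanDelta_adj_snd_le {V : Type} {τ : ℕ} (𝒢 : TemporalGraph V τ) (Δ : ℕ)
    ⦃a b : V × Fin τ⦄ (h : (gaifmanDelta 𝒢 Δ).Adj a b) : (b.2 : ℕ) ≤ a.2 + Δ := by
  rw [gaifmanDelta, fromRel_adj] at h
  rcases h.2 with (⟨he, -⟩ | ⟨-, -, h⟩) | (⟨he, -⟩ | ⟨-, h, -⟩) <;>
    simp only [Fin.ext_iff] at * <;> omega

namespace TemporalGraph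

variable {V : Type} {τ : ℕ} (𝒢 : TemporalGraph V τ)

theorem differential_adj_iff {t W : ℕ} (h : t + W ≤ τ) {x y : V} {i j : Fin W} :
    (𝒢.differential t W h).Adj (x, i) (y, j) ↔
      𝒢.expansion.Adj (x, ⟨t + i, by omega⟩) (y, ⟨t + j, by omega⟩) := by
  simp only [differential, expansion, fromRel_adj, ne_eq, Prod.mk.injEq, Fin.ext_iff, add_assoc,
    Nat.add_left_cancel_iff]

theorem nonempty_induce_embedding_differential {S : Set (V × Fin τ)} {t W : ℕ} (h : t + W ≤ τ)
    (hS : ∀ b ∈ S, t ≤ (b.2 : ℕ) ∧ (b.2 : ℕ) < t + W) :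
    Nonempty (𝒢.expansion.induce S ↪g 𝒢.differential t W h) := by
  let shift : S → V × Fin W := fun b => (b.1.1, ⟨b.1.2 - t, by have := hS b b.2; omega⟩)
  have unshift : ∀ b : S, ((shift b).1, (⟨t + (shift b).2, by omega⟩ : Fin τ)) = b.1 := fun b =>
    Prod.ext rfl (Fin.ext (by have := hS b b.2; simp only [shift]; omega))
  refine ⟨⟨⟨shift, fun b c hbc => Subtype.ext ?_⟩, fun {b c} => ?_⟩⟩
  · rw [← unshift b, ← unshift c]
    simp only [hbc]
  · exact (differential_adj_iff 𝒢 h).trans (by rw [unshift b, unshift c]; rfl)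

end TemporalGraph

/-- the Gaifman graph of the substructure of S(𝒢) induced by the
r-neighbourhood N_r(a) (taken in the σ_Δ Gaifman graph) is an induced subgraph
of the differential of 𝒢 at t_a − rΔ over window 2rΔ + 1; consequently its
tree-width is at most the (2rΔ+1)-differential tree-width of 𝒢. -/
theorem local_substructure_treewidth {V : Type} {τ : ℕ} (𝒢 : TemporalGraph V τ)
    (Δ : ℕ) (v : V) (ta : Fin τ) (r : ℕ)
    (hlow : r * Δ ≤ (ta : ℕ)) (hhigh : (ta : ℕ) + r * Δ + 1 ≤ τ) :
    Nonempty ((𝒢.expansion.induce (_root_.ball (gaifmanDelta 𝒢 Δ) (v, ta) r)) ↪g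
      (𝒢.differential ((ta : ℕ) - r * Δ) (2 * (r * Δ) + 1) (by omega))) ∧
    (∀ w : ℕ, DtwLE 𝒢 (2 * (r * Δ) + 1) w →
      TreewidthLE (𝒢.expansion.induce (_root_.ball (gaifmanDelta 𝒢 Δ) (v, ta) r)) w) := by
  have hwindow : ∀ b ∈ _root_.ball (gaifmanDelta 𝒢 Δ) (v, ta) r,
      (ta : ℕ) - r * Δ ≤ (b.2 : ℕ) ∧ (b.2 : ℕ) < (ta : ℕ) - r * Δ + (2 * (r * Δ) + 1) := by
    intro b hb
    have := le_add_mul_of_mem_ball (fun b => (b.2 : ℕ)) (gaifmanDelta_adj_snd_le 𝒢 Δ) hb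
    dsimp only at this
    omega
  obtain ⟨e⟩ := 𝒢.nonempty_induce_embedding_differential (by omega) hwindow
  exact ⟨⟨e⟩, fun w hw => (hw _ _).of_embedding e⟩
end

section
/- Let 𝒢 be a temporal graph. Then the twin-width of the {adj, succ}-structure S(𝒢) (as a trigraph/binary structure, where contractions must preserve each relation separately) satisfies tww(𝒢_→) ≤ tww(S(𝒢)) ≤ tww(𝒢_→) + 2; moreover, any d-contraction sequence of 𝒢_→ is a (d+2)-contraction sequence of S(𝒢). -/
open SimpleGraph

/-- Homogeneity of a pair of sets with respect to two relations: fully related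
by the first, fully related by the second, or fully unrelated. -/
def homogPair {α : Type} (G₁ G₂ : SimpleGraph α) (X Y : Set α) : Prop :=
  (∀ x ∈ X, ∀ y ∈ Y, G₁.Adj x y) ∨ (∀ x ∈ X, ∀ y ∈ Y, G₂.Adj x y) ∨
  (∀ x ∈ X, ∀ y ∈ Y, ¬ G₁.Adj x y ∧ ¬ G₂.Adj x y)

/-- Twin-width of the two-relation structure (G₁, G₂). -/
noncomputable def twinwidthPair {α : Type} (G₁ G₂ : SimpleGraph α) : ℕ∞ :=
  sInf {w : ℕ∞ | ∃ d : ℕ,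
    (∃ c : ContractionSeq α, c.RedDegLE (homogPair G₁ G₂) d) ∧ w = d}

/-- The local (adj) edges of the static expansion, as a graph. -/
def adjGraph {V : Type} {τ : ℕ} (𝒢 : TemporalGraph V τ) :
    SimpleGraph (V × Fin τ) :=
  SimpleGraph.fromRel (fun a b => a.2 = b.2 ∧ (𝒢.snapshot a.2).Adj a.1 b.1)

/-- The temporal (succ) edges of the static expansion, as a graph. -/
def succGraph {V : Type} {τ : ℕ} (𝒢 : TemporalGraph V τ) :
    SimpleGraph (V × Fin τ) :=
  SimpleGraph.fromRel (fun a b => a.1 = b.1 ∧ (a.2 : ℕ) + 1 = (b.2 : ℕ))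

/-! Every pair of parts that is homogeneous for `(adj, succ)` is homogeneous for
`𝒢_→ = adj ⊔ succ`, which gives the lower bound. Conversely, if parts `X, Y` are black in `𝒢_→`
but red in `S(𝒢)`, then they are complete in `𝒢_→` and `Y` contains a common neighbour `b` of `X`
that is a `succ`-neighbour of some point of `X`. There are at most two such `b`: two at the same
time are copies of the same vertex, and three at times `t₁ < t₂ < t₃` would force all of `X`,
being within one time step of each of them, to live at time `t₂`, while the `b` at time `t₂` has
a `succ`-neighbour in `X`. As parts are disjoint, each part gains at most two red neighbours. -/

section Partition

variable {α : Type}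

theorem Set.encard_le_two_of_forall_ne {s : Set α}
    (h : ∀ a ∈ s, ∀ b ∈ s, ∀ c ∈ s, a ≠ b → a ≠ c → b ≠ c → False) : s.encard ≤ 2 := by
  by_contra! hlt
  obtain ⟨t, hts, ht⟩ := Set.exists_subset_encard_eq (Order.add_one_le_of_lt hlt)
  obtain ⟨a, b, c, hab, hac, hbc, rfl⟩ := Set.encard_eq_three.mp ht
  simp only [Set.insert_subset_iff, Set.singleton_subset_iff] at hts
  exact h a hts.1 b hts.2.1 c hts.2.2 hab hac hbc

theorem Setoid.IsPartition.encard_setOf_inter_nonempty_le {P : Set (Set α)}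
    (hP : Setoid.IsPartition P) (S : Set α) :
    {Y | Y ∈ P ∧ (Y ∩ S).Nonempty}.encard ≤ S.encard := by
  refine le_trans (Set.encard_le_encard ?_)
    (Set.encard_image_le (fun b => {x | Setoid.mkClasses P hP.2 x b}) S)
  rintro Y ⟨hY, b, hbY, hbS⟩
  exact ⟨b, hbS, (Setoid.eq_eqv_class_of_mem hP.2 hY hbY).symm⟩

end Partition

namespace ContractionSeq

variable {α : Type}

theorem finite_parts (c : ContractionSeq α) (i : Fin (c.n + 1)) : (c.P i).Finite := by
  induction i using Fin.reverseInduction with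
  | last => rw [c.last]; exact Set.finite_singleton _
  | cast i ih =>
    obtain ⟨X, Y, -, -, -, hstep⟩ := c.step i
    refine ((ih.insert Y).insert X).subset fun Z hZ => ?_
    by_cases hZX : Z = X
    · exact .inl hZX
    by_cases hZY : Z = Y
    · exact .inr (.inl hZY)
    rw [hstep]
    exact .inr (.inr (.inr ⟨hZ, by simp [hZX, hZY]⟩))

theorem RedDegLE.mono_hom {c : ContractionSeq α} {hom hom' : Set α → Set α → Prop} {d : ℕ}
    (himp : ∀ X Y, hom' X Y → hom X Y) (h : c.RedDegLE hom' d) : c.RedDegLE hom d := by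
  intro i X hX
  refine le_trans (Set.ncard_le_ncard ?_ ((c.finite_parts i).subset fun Y hY => hY.1)) (h i X hX)
  exact fun Y ⟨hY, hYX, hn⟩ => ⟨hY, hYX, fun h' => hn (himp X Y h')⟩

end ContractionSeq

section TwoRelations

variable {α : Type} (G₁ G₂ : SimpleGraph α)

theorem homog_sup_of_homogPair {X Y : Set α} (h : homogPair G₁ G₂ X Y) :
    homog (G₁ ⊔ G₂) X Y := by
  rcases h with h | h | h
  · exact .inl fun x hx y hy => .inl (h x hx y hy)
  · exact .inl fun x hx y hy => .inr (h x hx y hy)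
  · exact .inr fun x hx y hy hxy => hxy.elim (h x hx y hy).1 (h x hx y hy).2

/-- The points that can turn a black `G₁ ⊔ G₂`-edge at `X` red for the pair `(G₁, G₂)`. -/
def mixedNeighbors (X : Set α) : Set α :=
  {b | (∃ a ∈ X, G₂.Adj a b) ∧ ∀ a ∈ X, (G₁ ⊔ G₂).Adj a b}

variable {G₁ G₂} in
theorem inter_mixedNeighbors_nonempty {X Y : Set α} (hhom : homog (G₁ ⊔ G₂) X Y)
    (hred : ¬ homogPair G₁ G₂ X Y) : (Y ∩ mixedNeighbors G₁ G₂ X).Nonempty := by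
  rcases hhom with hcomplete | hanti
  · obtain ⟨x, hx, y, hy, hxy⟩ : ∃ x ∈ X, ∃ y ∈ Y, ¬ G₁.Adj x y := by
      by_contra! h
      exact hred (.inl h)
    exact ⟨y, hy, ⟨x, hx, (hcomplete x hx y hy).resolve_left hxy⟩, fun a ha => hcomplete a ha y hy⟩
  · exact absurd (.inr (.inr fun x hx y hy => not_or.mp (hanti x hx y hy))) hred

variable {G₁ G₂} in
theorem ContractionSeq.RedDegLE.homogPair_of_homog_sup {c : ContractionSeq α} {d k : ℕ}
    (h : c.RedDegLE (homog (G₁ ⊔ G₂)) d)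
    (hk : ∀ X, (mixedNeighbors G₁ G₂ X).encard ≤ k) :
    c.RedDegLE (homogPair G₁ G₂) (d + k) := by
  intro i X hX
  set red := {Y | Y ∈ c.P i ∧ Y ≠ X ∧ ¬ homog (G₁ ⊔ G₂) X Y}
  set touched := {Y | Y ∈ c.P i ∧ (Y ∩ mixedNeighbors G₁ G₂ X).Nonempty}
  have hsub : {Y | Y ∈ c.P i ∧ Y ≠ X ∧ ¬ homogPair G₁ G₂ X Y} ⊆ red ∪ touched :=
    fun Y ⟨hY, hYX, hred⟩ => by
      by_cases hhom : homog (G₁ ⊔ G₂) X Y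
      · exact .inr ⟨hY, inter_mixedNeighbors_nonempty hhom hred⟩
      · exact .inl ⟨hY, hYX, hhom⟩
  have htouched : touched.ncard ≤ k :=
    (Set.encard_le_coe_iff_finite_ncard_le.mp
      (((c.isPartition i).encard_setOf_inter_nonempty_le _).trans (hk X))).2
  have hfin : (red ∪ touched).Finite :=
    (c.finite_parts i).subset (Set.union_subset (fun Y hY => hY.1) fun Y hY => hY.1)
  calc _ ≤ (red ∪ touched).ncard := Set.ncard_le_ncard hsub hfin
    _ ≤ red.ncard + touched.ncard := Set.ncard_union_le red touched
    _ ≤ d + k := add_le_add (h i X hX) htouched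

theorem twinwidth_sup_le_twinwidthPair : twinwidth (G₁ ⊔ G₂) ≤ twinwidthPair G₁ G₂ :=
  sInf_le_sInf fun _ ⟨d, ⟨c, hc⟩, hw⟩ =>
    ⟨d, ⟨c, hc.mono_hom fun _ _ => homog_sup_of_homogPair G₁ G₂⟩, hw⟩

variable {G₁ G₂} in
theorem twinwidthPair_le_twinwidth_sup_add {k : ℕ}
    (hk : ∀ X, (mixedNeighbors G₁ G₂ X).encard ≤ k) :
    twinwidthPair G₁ G₂ ≤ twinwidth (G₁ ⊔ G₂) + k := by
  rw [twinwidth, ENat.sInf_add]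
  exact le_iInf₂ fun _ ⟨d, ⟨c, hc⟩, hw⟩ =>
    sInf_le ⟨d + k, ⟨c, hc.homogPair_of_homog_sup hk⟩, by rw [hw, Nat.cast_add]⟩

end TwoRelations

section Temporal

variable {V : Type} {τ : ℕ} {𝒢 : TemporalGraph V τ}

theorem TemporalGraph.expansion_eq_sup (𝒢 : TemporalGraph V τ) :
    𝒢.expansion = adjGraph 𝒢 ⊔ succGraph 𝒢 := by
  ext a b
  simp only [TemporalGraph.expansion, adjGraph, succGraph, sup_adj, fromRel_adj]
  tauto

theorem succGraph_adj_iff {a b : V × Fin τ} :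
    (succGraph 𝒢).Adj a b ↔
      a.1 = b.1 ∧ ((a.2 : ℕ) + 1 = b.2 ∨ (b.2 : ℕ) + 1 = a.2) := by
  simp only [succGraph, fromRel_adj]
  constructor
  · rintro ⟨-, ⟨hv, ht⟩ | ⟨hv, ht⟩⟩
    exacts [⟨hv, .inl ht⟩, ⟨hv.symm, .inr ht⟩]
  · rintro ⟨hv, ht | ht⟩
    · exact ⟨fun h => by rw [h] at ht; omega, .inl ⟨hv, ht⟩⟩
    · exact ⟨fun h => by rw [h] at ht; omega, .inr ⟨hv.symm, ht⟩⟩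

theorem snd_eq_or_succGraph_adj_of_sup_adj {a b : V × Fin τ}
    (h : (adjGraph 𝒢 ⊔ succGraph 𝒢).Adj a b) :
    (a.2 : ℕ) = b.2 ∨ (succGraph 𝒢).Adj a b := by
  refine h.imp_left fun hadj => ?_
  simp only [adjGraph, fromRel_adj] at hadj
  rcases hadj.2 with ⟨ht, -⟩ | ⟨ht, -⟩ <;> simp [ht]

theorem eq_of_mem_mixedNeighbors_of_snd_eq {X : Set (V × Fin τ)} {b b' : V × Fin τ}
    (hb : b ∈ mixedNeighbors (adjGraph 𝒢) (succGraph 𝒢) X)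
    (hb' : b' ∈ mixedNeighbors (adjGraph 𝒢) (succGraph 𝒢) X) (ht : b.2 = b'.2) : b = b' := by
  obtain ⟨a, ha, hab⟩ := hb.1
  obtain ⟨hv, hab⟩ := succGraph_adj_iff.mp hab
  have hv' : a.1 = b'.1 := by
    rcases snd_eq_or_succGraph_adj_of_sup_adj (hb'.2 a ha) with ht' | hab'
    · rw [← ht] at ht'; omega
    · exact (succGraph_adj_iff.mp hab').1
  exact Prod.ext (hv.symm.trans hv') ht

theorem snd_le_of_mem_mixedNeighbors {X : Set (V × Fin τ)} {a b : V × Fin τ}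
    (hb : b ∈ mixedNeighbors (adjGraph 𝒢) (succGraph 𝒢) X) (ha : a ∈ X) :
    (a.2 : ℕ) ≤ b.2 + 1 ∧ (b.2 : ℕ) ≤ a.2 + 1 := by
  rcases snd_eq_or_succGraph_adj_of_sup_adj (hb.2 a ha) with ht | hab
  · omega
  · have := (succGraph_adj_iff.mp hab).2
    omega

theorem encard_mixedNeighbors_le_two (X : Set (V × Fin τ)) :
    (mixedNeighbors (adjGraph 𝒢) (succGraph 𝒢) X).encard ≤ 2 := by
  refine Set.encard_le_two_of_forall_ne fun b₁ h₁ b₂ h₂ b₃ h₃ n₁₂ n₁₃ n₂₃ => ?_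
  have distinct {b b'} (hb : b ∈ mixedNeighbors (adjGraph 𝒢) (succGraph 𝒢) X)
      (hb' : b' ∈ mixedNeighbors (adjGraph 𝒢) (succGraph 𝒢) X) (hne : b ≠ b') :
      (b.2 : ℕ) ≠ b'.2 := fun ht => hne (eq_of_mem_mixedNeighbors_of_snd_eq hb hb' (Fin.ext ht))
  have t₁₂ := distinct h₁ h₂ n₁₂
  have t₁₃ := distinct h₁ h₃ n₁₃
  have t₂₃ := distinct h₂ h₃ n₂₃
  obtain ⟨a₁, ha₁, s₁⟩ := h₁.1
  obtain ⟨a₂, ha₂, s₂⟩ := h₂.1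
  obtain ⟨a₃, ha₃, s₃⟩ := h₃.1
  have s₁ := (succGraph_adj_iff.mp s₁).2
  have s₂ := (succGraph_adj_iff.mp s₂).2
  have s₃ := (succGraph_adj_iff.mp s₃).2
  have := snd_le_of_mem_mixedNeighbors h₂ ha₁
  have := snd_le_of_mem_mixedNeighbors h₃ ha₁
  have := snd_le_of_mem_mixedNeighbors h₁ ha₂
  have := snd_le_of_mem_mixedNeighbors h₃ ha₂
  have := snd_le_of_mem_mixedNeighbors h₁ ha₃
  have := snd_le_of_mem_mixedNeighbors h₂ ha₃
  omega

end Temporal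

/-- tww(𝒢_→) ≤ tww(S(𝒢)) ≤ tww(𝒢_→) + 2, and any d-contraction
sequence of 𝒢_→ is a (d+2)-contraction sequence of the structure S(𝒢). -/
theorem twinwidth_structure_sandwich {V : Type} {τ : ℕ}
    (𝒢 : TemporalGraph V τ) :
    twinwidth 𝒢.expansion ≤ twinwidthPair (adjGraph 𝒢) (succGraph 𝒢) ∧
    twinwidthPair (adjGraph 𝒢) (succGraph 𝒢) ≤ twinwidth 𝒢.expansion + 2 ∧
    (∀ (c : ContractionSeq (V × Fin τ)) (d : ℕ),
      c.RedDegLE (homog 𝒢.expansion) d →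
      c.RedDegLE (homogPair (adjGraph 𝒢) (succGraph 𝒢)) (d + 2)) := by
  rw [𝒢.expansion_eq_sup]
  exact ⟨twinwidth_sup_le_twinwidthPair _ _,
    twinwidthPair_le_twinwidth_sup_add encard_mixedNeighbors_le_two,
    fun _ _ h => h.homogPair_of_homog_sup encard_mixedNeighbors_le_two⟩
end
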